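/- Let ‖·‖ be the Euclidean norm on R^n and define R = (1/2)·max over pairs x1, x2 in a compact body B of ‖x1 - x2‖ (half the diameter). Then there exists a point c ∈ R^n such that B ⊆ B(c, R√(2n/(n+1))) (Jung's theorem); in particular for n = 2, B is contained in a ball of radius (2/√3)·R ≤ 2R. -/

import Mathlib

open Metric Finset Module

section JungAux
variable {n : ℕ}

-- Step A: existence of a minimizer of the max-distance function
lemma jung_exists_min' (S : Finset (EuclideanSpace ℝ (Fin n))) (hS : S.Nonempty) :
    ∃ c : EuclideanSpace ℝ (Fin n),
      ∀ c', S.sup' hS (fun x => dist c x) ≤ S.sup' hS (fun x => dist c' x) := by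
  set f : (EuclideanSpace ℝ (Fin n)) → ℝ := fun c => S.sup' hS (fun x => dist c x) with hf
  have hle : ∀ c c', f c ≤ f c' + dist c c' := by
    intro c c'
    apply Finset.sup'_le
    intro x hx
    calc dist c x ≤ dist c c' + dist c' x := dist_triangle _ _ _
      _ ≤ dist c c' + f c' := by gcongr; exact Finset.le_sup' _ hx
      _ = f c' + dist c c' := by ring
  have hlip : LipschitzWith 1 f := by
    apply LipschitzWith.of_dist_le_mul
    intro c c'
    rw [Real.dist_eq, NNReal.coe_one, one_mul, abs_sub_le_iff]
    constructor
    · linarith [hle c c']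
    · linarith [hle c' c, dist_comm c c']
  obtain ⟨x0, hx0⟩ := hS
  have hK : IsCompact (closedBall x0 (f x0)) := isCompact_closedBall _ _
  have hKne : (closedBall x0 (f x0)).Nonempty := by
    refine ⟨x0, ?_⟩
    simp only [mem_closedBall, dist_self]
    exact le_trans dist_nonneg (Finset.le_sup' (fun x => dist x0 x) hx0)
  obtain ⟨c, hcK, hmin⟩ := hK.exists_isMinOn hKne hlip.continuous.continuousOn
  refine ⟨c, fun c' => ?_⟩
  by_cases h : c' ∈ closedBall x0 (f x0)
  · exact hmin h
  · have h1 : f x0 < dist c' x0 := by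
      simpa [mem_closedBall, dist_comm] using h
    have h2 : dist c' x0 ≤ f c' := Finset.le_sup' _ hx0
    have hx0K : x0 ∈ closedBall x0 (f x0) := by
      rw [mem_closedBall, dist_self]
      exact le_trans dist_nonneg (Finset.le_sup' (fun x => dist x0 x) hx0)
    have h3 : f c ≤ f x0 := hmin hx0K
    linarith

-- Step B: a minimizing center lies in the convex hull of the farthest points
lemma jung_center_in_hull' {n : ℕ} (S : Finset (EuclideanSpace ℝ (Fin n))) (hS : S.Nonempty)
    (c : EuclideanSpace ℝ (Fin n))
    (hmin : ∀ c', S.sup' hS (fun x => dist c x) ≤ S.sup' hS (fun x => dist c' x)) :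
    c ∈ convexHull ℝ {x : EuclideanSpace ℝ (Fin n) |
      x ∈ S ∧ dist c x = S.sup' hS (fun x => dist c x)} := by
  classical
  by_contra hc
  set r : ℝ := S.sup' hS (fun x => dist c x) with hr
  set T : Set (EuclideanSpace ℝ (Fin n)) := {x | x ∈ S ∧ dist c x = r} with hT
  have hTfin : T.Finite := S.finite_toSet.subset (fun x hx => hx.1)
  have hTne : T.Nonempty := by
    obtain ⟨x, hx, hxe⟩ := Finset.exists_mem_eq_sup' hS (fun x => dist c x)
    exact ⟨x, hx, hxe.symm⟩
  set K : Set (EuclideanSpace ℝ (Fin n)) := convexHull ℝ T with hK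
  have hKconv : Convex ℝ K := convex_convexHull _ _
  have hKcomp : IsCompact K := hTfin.isCompact_convexHull (𝕜 := ℝ)
  have hKne : K.Nonempty := hTne.mono (subset_convexHull _ _)
  obtain ⟨p, hpK, hp⟩ := exists_norm_eq_iInf_of_complete_convex hKne hKcomp.isComplete hKconv c
  have hproj : ∀ w ∈ K, (inner ℝ (c - p) (w - p) : ℝ) ≤ 0 :=
    (norm_eq_iInf_iff_real_inner_le_zero hKconv hpK).mp hp
  have hpc : p ≠ c := fun h => hc (h ▸ hpK)
  set d : ℝ := ‖p - c‖ with hd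
  have hd0 : 0 < d := by
    rw [hd, norm_pos_iff]
    exact sub_ne_zero.mpr hpc
  -- key inner product inequality for farthest points
  have hinner : ∀ x ∈ T, d ^ 2 ≤ (inner ℝ (x - c) (p - c) : ℝ) := by
    intro x hx
    have h1 : (inner ℝ (c - p) (x - p) : ℝ) ≤ 0 := hproj x (subset_convexHull _ _ hx)
    have h2 : (inner ℝ (x - c) (p - c) : ℝ) = (inner ℝ (c - p) (x - p) : ℝ) * (-1) + ‖p - c‖ ^ 2 := by
      have : (x : EuclideanSpace ℝ (Fin n)) - c = (x - p) + (p - c) := by abel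
      rw [this, inner_add_left, real_inner_self_eq_norm_sq]
      have : (inner ℝ (x - p) (p - c) : ℝ) = (inner ℝ (c - p) (x - p) : ℝ) * (-1) := by
        rw [real_inner_comm]
        have : (p : EuclideanSpace ℝ (Fin n)) - c = -(c - p) := by abel
        rw [this, inner_neg_left]
        ring
      rw [this]
    rw [h2, hd]
    nlinarith
  -- margin for non-farthest points
  set δ : ℝ := if h : (S.filter (fun x => x ∉ T)).Nonempty
      then (S.filter (fun x => x ∉ T)).inf' h (fun x => r - dist c x) else 1 with hδ
  have hδ0 : 0 < δ := by
    rw [hδ]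
    split_ifs with h
    · apply Finset.lt_inf'_iff .. |>.mpr
      intro x hx
      rw [Finset.mem_filter] at hx
      have hxr : dist c x ≤ r := Finset.le_sup' _ hx.1
      have hxne : dist c x ≠ r := fun he => hx.2 ⟨hx.1, he⟩
      have := lt_of_le_of_ne hxr hxne
      linarith
    · exact one_pos
  set t : ℝ := min 1 (δ / (2 * d)) with ht
  have ht0 : 0 < t := lt_min one_pos (by positivity)
  have ht1 : t ≤ 1 := min_le_left _ _
  set c' : EuclideanSpace ℝ (Fin n) := c + t • (p - c) with hc'
  have hcc' : dist c' c = t * d := by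
    rw [hc', dist_eq_norm]
    simp only [add_sub_cancel_left, norm_smul, Real.norm_eq_abs, abs_of_pos ht0, hd]
  have hr0 : 0 ≤ r := by
    obtain ⟨x, hx⟩ := hS
    exact le_trans dist_nonneg (Finset.le_sup' (fun x => dist c x) hx)
  -- all points get strictly closer to c'
  have hclose : ∀ x ∈ S, dist c' x < r := by
    intro x hx
    by_cases hxT : x ∈ T
    · have hxr : dist c x = r := hxT.2
      have hsq : dist c' x ^ 2 < r ^ 2 := by
        have hxe : x - c' = (x - c) - t • (p - c) := by
          rw [hc']; module
        rw [dist_comm, dist_eq_norm, hxe, norm_sub_sq_real, real_inner_smul_right, norm_smul,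
          mul_pow, Real.norm_eq_abs, abs_of_pos ht0]
        have h1 : ‖x - c‖ ^ 2 = r ^ 2 := by
          rw [← dist_eq_norm, dist_comm, hxr]
        have h2 := hinner x hxT
        have h3 : ‖p - c‖ ^ 2 = d ^ 2 := by rw [hd]
        have h4 : t * d ^ 2 ≤ t * inner ℝ (x - c) (p - c) :=
          mul_le_mul_of_nonneg_left h2 ht0.le
        have ht2 : t ^ 2 ≤ t := by nlinarith
        have h5 : t ^ 2 * d ^ 2 ≤ t * d ^ 2 := mul_le_mul_of_nonneg_right ht2 (sq_nonneg d)
        have h6 : 0 < t * d ^ 2 := by positivity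
        nlinarith
      have hd' : 0 ≤ dist c' x := dist_nonneg
      nlinarith
    · have hxF : x ∈ S.filter (fun x => x ∉ T) := Finset.mem_filter.mpr ⟨hx, hxT⟩
      have hδle : δ ≤ r - dist c x := by
        rw [hδ]
        rw [dif_pos ⟨x, hxF⟩]
        exact Finset.inf'_le _ hxF
      have htd : t * d ≤ δ / 2 := by
        calc t * d ≤ (δ / (2 * d)) * d := by
              apply mul_le_mul_of_nonneg_right (min_le_right _ _) hd0.le
          _ = δ / 2 := by field_simp
      calc dist c' x ≤ dist c' c + dist c x := dist_triangle _ _ _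
        _ ≤ δ / 2 + dist c x := by rw [hcc']; linarith
        _ < δ + dist c x := by linarith
        _ ≤ r := by linarith
  -- contradiction with minimality
  obtain ⟨x₁, hx₁, hx₁e⟩ := Finset.exists_mem_eq_sup' hS (fun x => dist c' x)
  have : S.sup' hS (fun x => dist c' x) < r := hx₁e ▸ hclose x₁ hx₁
  exact absurd (hmin c') (not_le.mpr this)

lemma jung_finset (R : ℝ) (S : Finset (EuclideanSpace ℝ (Fin n))) (hS : S.Nonempty)
    (hd : ∀ x ∈ S, ∀ y ∈ S, dist x y ≤ 2 * R) :
    ∃ c : EuclideanSpace ℝ (Fin n),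
      ∀ x ∈ S, dist x c ≤ R * Real.sqrt (2 * n / (n + 1)) := by
  classical
  obtain ⟨c, hmin⟩ := jung_exists_min' S hS
  set r : ℝ := S.sup' hS (fun x => dist c x) with hr
  have hr0 : 0 ≤ r := by
    obtain ⟨x, hx⟩ := hS
    exact le_trans dist_nonneg (Finset.le_sup' (fun x => dist c x) hx)
  have hR0 : 0 ≤ R := by
    obtain ⟨x, hx⟩ := hS
    have := hd x hx x hx
    simp only [dist_self] at this
    linarith
  have hch := jung_center_in_hull' S hS c hmin
  rw [convexHull_eq_union] at hch
  simp only [Set.mem_iUnion] at hch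
  obtain ⟨u, hut, hai, hcu⟩ := hch
  -- cardinality bound via affine independence
  have hcard : (u.card : ℝ) ≤ n + 1 := by
    have h1 : Fintype.card ↥u ≤ finrank ℝ
        (vectorSpan ℝ (Set.range ((↑) : ↥u → EuclideanSpace ℝ (Fin n)))) + 1 :=
      hai.card_le_finrank_succ
    have h2 : finrank ℝ (vectorSpan ℝ (Set.range ((↑) : ↥u → EuclideanSpace ℝ (Fin n))))
        ≤ finrank ℝ (EuclideanSpace ℝ (Fin n)) := Submodule.finrank_le _
    have h3 : finrank ℝ (EuclideanSpace ℝ (Fin n)) = n := finrank_euclideanSpace_fin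
    have h4 : u.card ≤ n + 1 := by
      rw [← Fintype.card_coe]
      omega
    exact_mod_cast h4
  -- weights
  rw [Finset.convexHull_eq] at hcu
  obtain ⟨w, hw0, hw1, hwc⟩ := hcu
  have hsum : ∑ y ∈ u, w y • y = c := by
    have h := Finset.centerMass_eq_of_sum_1 u id hw1
    rw [h] at hwc
    simpa using hwc
  have hu_ne : u.Nonempty := by
    rcases Finset.eq_empty_or_nonempty u with h | h
    · exfalso
      rw [h] at hwc hw1
      simp at hw1
    · exact h
  have hzero : ∑ y ∈ u, w y • (y - c) = (0 : EuclideanSpace ℝ (Fin n)) := by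
    have : ∑ y ∈ u, w y • (y - c)
        = (∑ y ∈ u, w y • y) - (∑ y ∈ u, w y) • c := by
      rw [Finset.sum_smul, ← Finset.sum_sub_distrib]
      apply Finset.sum_congr rfl
      intro y hy
      rw [smul_sub]
    rw [this, hsum, hw1, one_smul, sub_self]
  have hru : ∀ x ∈ u, ‖x - c‖ = r := by
    intro x hx
    have hxT := hut hx
    rw [← dist_eq_norm, dist_comm]
    exact hxT.2
  have huS : ∀ x ∈ u, x ∈ S := fun x hx => (hut hx).1
  -- the double-sum identity
  set A : ℝ := ∑ x ∈ u, ∑ y ∈ u, w x * w y * ‖x - y‖ ^ 2 with hA_def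
  have hI : ∑ x ∈ u, ∑ y ∈ u, w x * w y * (inner ℝ (x - c) (y - c) : ℝ) = 0 := by
    apply Finset.sum_eq_zero
    intro x hx
    have : ∑ y ∈ u, w x * w y * (inner ℝ (x - c) (y - c) : ℝ)
        = w x * (inner ℝ (x - c) (∑ y ∈ u, w y • (y - c)) : ℝ) := by
      rw [inner_sum, Finset.mul_sum]
      apply Finset.sum_congr rfl
      intro y hy
      rw [real_inner_smul_right]
      ring
    rw [this, hzero, inner_zero_right, mul_zero]
  have hA : A = 2 * r ^ 2 := by
    have step : A = (∑ x ∈ u, ∑ y ∈ u, w x * w y * (2 * r ^ 2))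
        - 2 * (∑ x ∈ u, ∑ y ∈ u, w x * w y * (inner ℝ (x - c) (y - c) : ℝ)) := by
      rw [hA_def, Finset.mul_sum, ← Finset.sum_sub_distrib]
      apply Finset.sum_congr rfl
      intro x hx
      rw [Finset.mul_sum, ← Finset.sum_sub_distrib]
      apply Finset.sum_congr rfl
      intro y hy
      have hxy : x - y = (x - c) - (y - c) := by abel
      rw [hxy, norm_sub_sq_real, hru x hx, hru y hy]
      ring
    rw [step, hI, mul_zero, sub_zero]
    have h5 : ∀ x ∈ u, ∑ y ∈ u, w x * w y * (2 * r ^ 2)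
        = w x * (2 * r ^ 2) := by
      intro x hx
      rw [← Finset.sum_mul, ← Finset.mul_sum, hw1, mul_one]
    rw [Finset.sum_congr rfl h5, ← Finset.sum_mul, hw1, one_mul]
  -- the bound
  set s2 : ℝ := ∑ x ∈ u, (w x) ^ 2 with hs2
  have hbound : A ≤ 4 * R ^ 2 * (1 - s2) := by
    have hx_bound : ∀ x ∈ u, ∑ y ∈ u, w x * w y * ‖x - y‖ ^ 2
        ≤ (∑ y ∈ u, w x * w y * (2 * R) ^ 2) - w x ^ 2 * (2 * R) ^ 2 := by
      intro x hx
      have e1 : ∑ y ∈ u, w x * w y * ‖x - y‖ ^ 2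
          = ∑ y ∈ u.erase x, w x * w y * ‖x - y‖ ^ 2 := by
        rw [← Finset.add_sum_erase u _ hx]
        simp
      have e2 : (∑ y ∈ u, w x * w y * (2 * R) ^ 2)
          = w x * w x * (2 * R) ^ 2 + ∑ y ∈ u.erase x, w x * w y * (2 * R) ^ 2 := by
        exact (Finset.add_sum_erase u _ hx).symm
      rw [e1, e2]
      have e3 : ∑ y ∈ u.erase x, w x * w y * ‖x - y‖ ^ 2
          ≤ ∑ y ∈ u.erase x, w x * w y * (2 * R) ^ 2 := by
        apply Finset.sum_le_sum
        intro y hy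
        have hyu : y ∈ u := Finset.mem_of_mem_erase hy
        have hwxy : 0 ≤ w x * w y := mul_nonneg (hw0 x hx) (hw0 y hyu)
        apply mul_le_mul_of_nonneg_left _ hwxy
        have hdxy : ‖x - y‖ ≤ 2 * R := by
          rw [← dist_eq_norm]
          exact hd x (huS x hx) y (huS y hyu)
        exact pow_le_pow_left₀ (norm_nonneg _) hdxy 2
      nlinarith [e3]
    have step : A ≤ (∑ x ∈ u, ∑ y ∈ u, w x * w y * (2 * R) ^ 2)
        - ∑ x ∈ u, w x ^ 2 * (2 * R) ^ 2 := by
      rw [hA_def, ← Finset.sum_sub_distrib]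
      exact Finset.sum_le_sum hx_bound
    have h6 : (∑ x ∈ u, ∑ y ∈ u, w x * w y * (2 * R) ^ 2) = (2 * R) ^ 2 := by
      have h5 : ∀ x ∈ u, ∑ y ∈ u, w x * w y * (2 * R) ^ 2 = w x * (2 * R) ^ 2 := by
        intro x hx
        rw [← Finset.sum_mul, ← Finset.mul_sum, hw1, mul_one]
      rw [Finset.sum_congr rfl h5, ← Finset.sum_mul, hw1, one_mul]
    have h7 : ∑ x ∈ u, w x ^ 2 * (2 * R) ^ 2 = s2 * (2 * R) ^ 2 := by
      rw [hs2, Finset.sum_mul]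
    have : A ≤ (2 * R) ^ 2 - s2 * (2 * R) ^ 2 := by
      linarith [step, h6.ge, h6.le, h7.ge, h7.le]
    nlinarith [this]
  -- Σ w² ≥ 1/(n+1)
  have hs2card : 1 ≤ (u.card : ℝ) * s2 := by
    have := sq_sum_le_card_mul_sum_sq (s := u) (f := w)
    rw [hw1] at this
    simpa using this
  have hs2_0 : 0 ≤ s2 := Finset.sum_nonneg fun x _ => sq_nonneg _
  have hs2n : 1 ≤ ((n : ℝ) + 1) * s2 := by
    calc (1 : ℝ) ≤ (u.card : ℝ) * s2 := hs2card
      _ ≤ ((n : ℝ) + 1) * s2 := mul_le_mul_of_nonneg_right hcard hs2_0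
  -- conclude r ≤ R √(2n/(n+1))
  have hn1 : (0 : ℝ) < (n : ℝ) + 1 := by positivity
  have hrsq : r ^ 2 ≤ R ^ 2 * (2 * n / (n + 1)) := by
    rw [mul_div_assoc']
    rw [le_div_iff₀ hn1]
    nlinarith [hA, hbound, hs2n, sq_nonneg R, Nat.cast_nonneg (α := ℝ) n]
  have hrle : r ≤ R * Real.sqrt (2 * n / (n + 1)) := by
    have h8 : r = Real.sqrt (r ^ 2) := (Real.sqrt_sq hr0).symm
    rw [h8]
    calc Real.sqrt (r ^ 2) ≤ Real.sqrt (R ^ 2 * (2 * n / (n + 1))) :=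
          Real.sqrt_le_sqrt hrsq
      _ = R * Real.sqrt (2 * n / (n + 1)) := by
          rw [Real.sqrt_mul (sq_nonneg R), Real.sqrt_sq hR0]
  refine ⟨c, fun x hx => ?_⟩
  calc dist x c = dist c x := dist_comm _ _
    _ ≤ r := Finset.le_sup' (fun x => dist c x) hx
    _ ≤ R * Real.sqrt (2 * n / (n + 1)) := hrle



end JungAux

/-- Jung's theorem: a nonempty compact set `B ⊆ ℝⁿ` with `diam B = 2R` is contained in a
closed ball of radius `R √(2n/(n+1))`. -/
theorem jung_enclosing_ball (n : ℕ) (B : Set (EuclideanSpace ℝ (Fin n)))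
    (hB : IsCompact B) (hne : B.Nonempty) (R : ℝ) (hR : Metric.diam B = 2 * R) :
    ∃ c : EuclideanSpace ℝ (Fin n),
      B ⊆ Metric.closedBall c (R * Real.sqrt (2 * n / (n + 1))) := by
  classical
  set ρ : ℝ := R * Real.sqrt (2 * n / (n + 1)) with hρ
  have hhelly : (⋂ i : B, closedBall (i : EuclideanSpace ℝ (Fin n)) ρ).Nonempty := by
    apply Convex.helly_theorem_compact' (𝕜 := ℝ)
      (F := fun i : B => closedBall (i : EuclideanSpace ℝ (Fin n)) ρ)
    · exact fun i => convex_closedBall _ _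
    · exact fun i => isCompact_closedBall _ _
    · intro I _
      rcases I.eq_empty_or_nonempty with h | h
      · subst h
        simp only [Finset.notMem_empty, Set.iInter_of_empty, Set.iInter_univ]
        exact Set.univ_nonempty
      · set S : Finset (EuclideanSpace ℝ (Fin n)) :=
          I.image (Subtype.val : B → EuclideanSpace ℝ (Fin n)) with hSdef
        have hSne : S.Nonempty := h.image (Subtype.val : B → EuclideanSpace ℝ (Fin n))
        have hdS : ∀ x ∈ S, ∀ y ∈ S, dist x y ≤ 2 * R := by
          intro x hx y hy
          rw [hSdef, Finset.mem_image] at hx hy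
          obtain ⟨i, _, rfl⟩ := hx
          obtain ⟨j, _, rfl⟩ := hy
          rw [← hR]
          exact Metric.dist_le_diam_of_mem hB.isBounded i.2 j.2
        obtain ⟨c, hc⟩ := jung_finset R S hSne hdS
        refine ⟨c, ?_⟩
        rw [Set.mem_iInter₂]
        intro i hi
        rw [mem_closedBall, dist_comm]
        exact hc i (Finset.mem_image_of_mem (Subtype.val : B → EuclideanSpace ℝ (Fin n)) hi)
  obtain ⟨c, hc⟩ := hhelly
  refine ⟨c, fun x hx => ?_⟩
  have := Set.mem_iInter.mp hc ⟨x, hx⟩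
  rw [mem_closedBall] at this
  rw [mem_closedBall, dist_comm]
  exact this
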